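/- If ⌊(n+1)φ⌋ = ⌊nφ⌋ + 2 for a nonnegative integer n, then there exists a nonnegative integer m with ⌊m(φ+1)⌋ = ⌊nφ⌋ + 1, where φ = (1+√5)/2. -/

import Mathlib

noncomputable def phi : ℝ := (1 + Real.sqrt 5) / 2

/-!
Since `k ↦ ⌊kφ⌋` is monotone, a jump by `2` from `n` to `n + 1` means that `⌊nφ⌋ + 1` is
not of the form `⌊kφ⌋`. As `φ` is irrational and `1/φ + 1/(φ + 1) = 1`, Rayleigh's theorem then
puts it in the Beatty sequence of `φ + 1`.
-/

open Real

theorem Monotone.ne_add_one_of_map_succ_eq_add_two {f : ℤ → ℤ} (hf : Monotone f) {n : ℤ}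
    (h : f (n + 1) = f n + 2) (k : ℤ) : f k ≠ f n + 1 := by
  rcases le_or_gt k n with hkn | hnk
  · have := hf hkn
    omega
  · have := hf (Int.add_one_le_of_lt hnk)
    omega

theorem beattySeq_monotone {r : ℝ} (hr : 0 ≤ r) : Monotone (beattySeq r) :=
  fun _ _ hkl ↦ Int.floor_le_floor (mul_le_mul_of_nonneg_right (Int.cast_le.2 hkl) hr)

theorem Irrational.exists_nat_floor_mul_eq {r s : ℝ} (hrs : r.HolderConjugate s)
    (hr : Irrational r) {j : ℤ} (hj : 0 < j) (hjr : j ∉ {beattySeq r k | k > 0}) :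
    ∃ m : ℕ, ⌊(m : ℝ) * s⌋ = j := by
  have hj' : j ∈ {n : ℤ | 0 < n} := hj
  rw [← hr.beattySeq_symmDiff_beattySeq_pos hrs, Set.mem_symmDiff] at hj'
  obtain ⟨⟨m, hm, rfl⟩, -⟩ := hj'.resolve_left (fun h ↦ hjr h.1)
  exact ⟨m.toNat, by rw [beattySeq, ← Int.cast_natCast, Int.toNat_of_nonneg hm.le]⟩

theorem phi_eq_goldenRatio : phi = goldenRatio := rfl

theorem holderConjugate_phi_phi_add_one : phi.HolderConjugate (phi + 1) := by
  rw [Real.holderConjugate_iff, phi_eq_goldenRatio, ← goldenRatio_sq]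
  refine ⟨one_lt_goldenRatio, ?_⟩
  rw [← inv_pow, inv_goldenRatio, neg_sq, goldenConj_sq]
  ring

theorem stmt19 (n : ℕ)
    (h : ⌊((n : ℝ) + 1) * phi⌋ = ⌊(n : ℝ) * phi⌋ + 2) :
    ∃ m : ℕ, ⌊(m : ℝ) * (phi + 1)⌋ = ⌊(n : ℝ) * phi⌋ + 1 := by
  have hphi : 0 ≤ phi := phi_eq_goldenRatio ▸ goldenRatio_pos.le
  have hgap : beattySeq phi (n + 1) = beattySeq phi n + 2 := by
    simpa [beattySeq] using h
  refine Irrational.exists_nat_floor_mul_eq holderConjugate_phi_phi_add_one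
    (phi_eq_goldenRatio ▸ goldenRatio_irrational) ?_ ?_
  · have := Int.floor_nonneg.2 (mul_nonneg (Nat.cast_nonneg n) hphi)
    omega
  · rintro ⟨k, -, hk⟩
    exact (beattySeq_monotone hphi).ne_add_one_of_map_succ_eq_add_two hgap k
      (by simpa [beattySeq] using hk)
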